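/- arXiv:2103.09731 — 3 statements merged into one kernel-verified Lean document; each statement's English description precedes it below -/
import Mathlib

section
/- Let H be a d-light initialization of a connected weighted graph G, and let π(s,t) be a shortest s–t path in G. If exactly ℓ edges of π(s,t) are absent from H, then there exists a set N of at least d·ℓ/6 vertices such that each vertex of N is joined in H to some vertex of π(s,t) by an edge of weight at most W(s,t). -/
open scoped ENNReal Classical

/-- The total weight of a walk: the sum of the weights of its edges. -/
noncomputable def walkWeight {V : Type} (G : SimpleGraph V) (w : Sym2 V → ℝ≥0∞)
    {s t : V} (p : G.Walk s t) : ℝ≥0∞ :=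
  (p.edges.map w).sum

/-- Shortest-path distance in the weighted graph `(G, w)`, equal to `⊤` if there is no path. -/
noncomputable def gdist {V : Type} (G : SimpleGraph V) (w : Sym2 V → ℝ≥0∞)
    (s t : V) : ℝ≥0∞ :=
  ⨅ p : G.Walk s t, walkWeight G w p

/-- The maximum edge weight along a walk (0 for the trivial walk). -/
noncomputable def maxEdge {V : Type} (G : SimpleGraph V) (w : Sym2 V → ℝ≥0∞)
    {s t : V} (p : G.Walk s t) : ℝ≥0∞ :=
  (p.edges.map w).foldr max 0

/-- `π` assigns to each ordered vertex pair a shortest path: a walk whose total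
weight equals the shortest-path distance. -/
def IsShortestPathScheme {V : Type} (G : SimpleGraph V) (w : Sym2 V → ℝ≥0∞)
    (π : (s t : V) → G.Walk s t) : Prop :=
  ∀ s t : V, walkWeight G w (π s t) = gdist G w s t

/-- The edge weights are positive and finite on all edges of `G`. -/
def PosWeights {V : Type} (G : SimpleGraph V) (w : Sym2 V → ℝ≥0∞) : Prop :=
  ∀ e ∈ G.edgeSet, 0 < w e ∧ w e ≠ ⊤

/-- `H` is a `d`-light initialization of `(G, w)`, witnessed by the selection `S` which picks,
for each vertex `v`, the `d` lightest edges incident to `v` (all of them if `deg v < d`):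
`H` consists exactly of the selected edges. -/
def IsDLightInit {V : Type} [Fintype V] (G : SimpleGraph V) (w : Sym2 V → ℝ≥0∞) (d : ℕ)
    (H : SimpleGraph V) (S : V → Finset V) : Prop :=
  (∀ v : V, ∀ u ∈ S v, G.Adj v u) ∧
  (∀ v : V, (S v).card = min d (G.neighborSet v).ncard) ∧
  (∀ v u : V, G.Adj v u → u ∉ S v → ∀ x ∈ S v, w s(v, x) ≤ w s(v, u)) ∧
  (∀ a b : V, H.Adj a b ↔ G.Adj a b ∧ (b ∈ S a ∨ a ∈ S b))

/-!
Each edge `uv` of the shortest path that is missing from `H` forces `u` and `v` to have selected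
`d` neighbours each, all joined to them by edges lighter than `uv`. If the left (or the right)
endpoints of two missing edges share a selected neighbour `x`, the detour through `x` cannot beat
the shortest path, so the missing edges strictly between the two weigh in total at most one of
them. A greedily chosen family `A` of missing edges whose right endpoints have pairwise disjoint
selections, and a family `B` doing the same for the left endpoints, therefore meet every three
consecutive missing edges (weights are positive), so `ℓ ≤ 3 (|A| + |B|)`, while
`d |A|, d |B| ≤ |N|`.
-/

open Finset

section Kernels

variable {α : Type*} [LinearOrder α] (R : α → α → Prop)

/-- `A` is the kernel of the acyclic digraph with arcs `i → k` for `i < k ∧ R i k`, built greedily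
from the top. -/
theorem exists_upward_kernel (s : Finset α) :
    ∃ A ⊆ s, (∀ i ∈ A, ∀ k ∈ A, i < k → ¬R i k) ∧
      ∀ i ∈ s, i ∉ A → ∃ k ∈ A, i < k ∧ R i k := by
  classical
  induction s using Finset.induction_on_min with
  | empty => exact ⟨∅, subset_refl _, by simp, by simp⟩
  | insert a s ha ih =>
    obtain ⟨A, hAs, hind, hdom⟩ := ih
    by_cases haR : ∃ k ∈ A, a < k ∧ R a k
    · refine ⟨A, hAs.trans (subset_insert _ _), hind, fun i hi hiA => ?_⟩
      rcases mem_insert.1 hi with rfl | hi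
      · exact haR
      · exact hdom i hi hiA
    push Not at haR
    refine ⟨insert a A, insert_subset_insert _ hAs, ?_, fun i hi hiA => ?_⟩
    · intro i hi k hk hik
      rcases mem_insert.1 hi with rfl | hiA <;> rcases mem_insert.1 hk with rfl | hkA
      · exact absurd hik (lt_irrefl _)
      · exact haR k hkA hik
      · exact absurd (ha i (hAs hiA)) (not_lt.2 hik.le)
      · exact hind i hiA k hkA hik
    · obtain ⟨k, hk, hik, hR⟩ := hdom i ((mem_insert.1 hi).resolve_left
        fun h => hiA (h ▸ mem_insert_self _ _)) fun h => hiA (mem_insert_of_mem h)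
      exact ⟨k, mem_insert_of_mem hk, hik, hR⟩

theorem exists_downward_kernel (s : Finset α) :
    ∃ B ⊆ s, (∀ i ∈ B, ∀ k ∈ B, i < k → ¬R i k) ∧
      ∀ k ∈ s, k ∉ B → ∃ i ∈ B, i < k ∧ R i k := by
  obtain ⟨B, hBs, hind, hdom⟩ := exists_upward_kernel (α := αᵒᵈ) (fun k i => R i k) s
  exact ⟨B, hBs, fun i hi k hk hik => hind k hk i hi hik, hdom⟩

end Kernels

theorem mul_card_le_card_of_disjoint {ι β : Type*} [LinearOrder ι] [DecidableEq β]
    {A : Finset ι} {f : ι → Finset β} {N : Finset β} {d : ℕ}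
    (hdisj : ∀ i ∈ A, ∀ k ∈ A, i < k → Disjoint (f i) (f k))
    (hcard : ∀ i ∈ A, #(f i) = d) (hsub : ∀ i ∈ A, f i ⊆ N) : d * #A ≤ #N := by
  have hpair : (A : Set ι).PairwiseDisjoint f := by
    intro i hi k hk hik
    rcases hik.lt_or_gt with h | h
    · exact hdisj i hi k hk h
    · exact (hdisj k hk i hi h).symm
  calc d * #A = ∑ i ∈ A, #(f i) := by rw [sum_congr rfl hcard, sum_const, smul_eq_mul, mul_comm]
    _ = #(A.biUnion f) := (card_biUnion hpair).symm
    _ ≤ #N := card_le_card (biUnion_subset.2 hsub)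

theorem le_mul_card_of_forall_exists_near {C : Finset ℕ} {ℓ r : ℕ}
    (hC : ∀ j < ℓ, ∃ c ∈ C, j ≤ c ∧ c ≤ j + r) : ℓ ≤ (r + 1) * #C := by
  have hcover : range ℓ ⊆ C.biUnion fun c => Icc (c - r) c := by
    intro j hj
    obtain ⟨c, hc, hjc, hcj⟩ := hC j (mem_range.1 hj)
    exact mem_biUnion.2 ⟨c, hc, mem_Icc.2 ⟨by omega, hjc⟩⟩
  calc ℓ = #(range ℓ) := (card_range ℓ).symm
    _ ≤ #C * (r + 1) := (card_le_card hcover).trans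
        (card_biUnion_le_card_mul _ _ _ fun c _ => by rw [Nat.card_Icc]; omega)
    _ = (r + 1) * #C := mul_comm _ _

theorem add_le_sum_Ioo {M : Type*} [AddCommMonoid M] [PartialOrder M] [CanonicallyOrderedAdd M]
    (f : ℕ → M) {a b c : ℕ} (hac : a < c) (hcb : c + 1 < b) :
    f c + f (c + 1) ≤ ∑ m ∈ Ioo a b, f m := by
  rw [← sum_pair (Nat.ne_of_lt (Nat.lt_succ_self c))]
  refine sum_le_sum_of_subset fun m hm => ?_
  simp only [mem_insert, mem_singleton] at hm
  exact mem_Ioo.2 (by omega)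

theorem sum_Ioo_comp_le_sum_Ioo {M : Type*} [AddCommMonoid M] [PartialOrder M]
    [CanonicallyOrderedAdd M] (f : ℕ → M) (g : ℕ ↪o ℕ) (i k : ℕ) :
    ∑ m ∈ Ioo i k, f (g m) ≤ ∑ m ∈ Ioo (g i) (g k), f m := by
  rw [← sum_image g.injective.injOn]
  refine sum_le_sum_of_subset fun m hm => ?_
  obtain ⟨r, hr, rfl⟩ := mem_image.1 hm
  obtain ⟨hir, hrk⟩ := mem_Ioo.1 hr
  exact mem_Ioo.2 ⟨g.lt_iff_lt.2 hir, g.lt_iff_lt.2 hrk⟩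

/-- If none of `j, j + 1, j + 2` is in `A ∪ B`, the two dominations give
`ω (j + 1) + ω (j + 2) ≤ ω j` and `ω j + ω (j + 1) ≤ ω (j + 2)`, forcing `ω (j + 1) = 0`. -/
theorem exists_mem_union_near {ω : ℕ → ℝ≥0∞} {ℓ : ℕ} {A B : Finset ℕ}
    (hω : ∀ i < ℓ, 0 < ω i ∧ ω i ≠ ⊤) (hA : A ⊆ range ℓ)
    (hAdom : ∀ i ∈ range ℓ, i ∉ A → ∃ k ∈ A, i < k ∧ ∑ m ∈ Ioo i k, ω m ≤ ω i)
    (hBdom : ∀ k ∈ range ℓ, k ∉ B → ∃ i ∈ B, i < k ∧ ∑ m ∈ Ioo i k, ω m ≤ ω k) :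
    ∀ j < ℓ, ∃ c ∈ A ∪ B, j ≤ c ∧ c ≤ j + 2 := by
  intro j hj
  by_contra! hfar
  have hout : ∀ c, j ≤ c → c ≤ j + 2 → c ∉ A ∧ c ∉ B := fun c h₁ h₂ =>
    ⟨fun h => absurd (hfar c (mem_union_left _ h) h₁) (by omega),
      fun h => absurd (hfar c (mem_union_right _ h) h₁) (by omega)⟩
  obtain ⟨k, hkA, hjk, hk⟩ := hAdom j (mem_range.2 hj) (hout j le_rfl (by omega)).1
  have hjk₃ : j + 2 < k := by
    have := (hout (j + 1) (by omega) (by omega)).1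
    have := (hout (j + 2) (by omega) le_rfl).1
    grind
  have hkℓ : k < ℓ := mem_range.1 (hA hkA)
  obtain ⟨i, hiB, hij, hi⟩ :=
    hBdom (j + 2) (mem_range.2 (by omega)) (hout (j + 2) (by omega) le_rfl).2
  have hij₂ : i < j := by
    have := (hout j le_rfl (by omega)).2
    have := (hout (j + 1) (by omega) (by omega)).2
    grind
  have h₁ : ω (j + 1) + ω (j + 2) ≤ ω j := (add_le_sum_Ioo ω (by omega) (by omega)).trans hk
  have h₂ : ω j + ω (j + 1) ≤ ω (j + 2) := (add_le_sum_Ioo ω hij₂ (by omega)).trans hi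
  have h₃ : ω j + (ω (j + 1) + ω (j + 1)) ≤ ω j + 0 :=
    calc ω j + (ω (j + 1) + ω (j + 1)) = ω (j + 1) + (ω j + ω (j + 1)) := by ring
      _ ≤ ω (j + 1) + ω (j + 2) := by gcongr
      _ ≤ ω j + 0 := by rwa [add_zero]
  have h₄ := ENNReal.le_of_add_le_add_left (hω j hj).2 h₃
  exact (hω (j + 1) (by omega)).1.ne' (by simpa using h₄)

theorem mul_le_six_mul_card {ι : Type*} [DecidableEq ι] {d ℓ : ℕ} {ω : ℕ → ℝ≥0∞}
    {X Y : ℕ → Finset ι} {N : Finset ι} (hω : ∀ i < ℓ, 0 < ω i ∧ ω i ≠ ⊤)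
    (hX : ∀ i < ℓ, #(X i) = d ∧ X i ⊆ N) (hY : ∀ i < ℓ, #(Y i) = d ∧ Y i ⊆ N)
    (hXX : ∀ i k, i < k → k < ℓ → ¬Disjoint (X i) (X k) → ∑ m ∈ Ioo i k, ω m ≤ ω k)
    (hYY : ∀ i k, i < k → k < ℓ → ¬Disjoint (Y i) (Y k) → ∑ m ∈ Ioo i k, ω m ≤ ω i) :
    d * ℓ ≤ 6 * #N := by
  obtain ⟨A, hAs, hAind, hAdom⟩ :=
    exists_upward_kernel (fun i k => ∑ m ∈ Ioo i k, ω m ≤ ω i) (range ℓ)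
  obtain ⟨B, hBs, hBind, hBdom⟩ :=
    exists_downward_kernel (fun i k => ∑ m ∈ Ioo i k, ω m ≤ ω k) (range ℓ)
  have hAℓ : ∀ i ∈ A, i < ℓ := fun i hi => mem_range.1 (hAs hi)
  have hBℓ : ∀ i ∈ B, i < ℓ := fun i hi => mem_range.1 (hBs hi)
  have hA : d * #A ≤ #N := mul_card_le_card_of_disjoint
    (fun i hi k hk hik => by_contra fun h => hAind i hi k hk hik (hYY i k hik (hAℓ k hk) h))
    (fun i hi => (hY i (hAℓ i hi)).1) (fun i hi => (hY i (hAℓ i hi)).2)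
  have hB : d * #B ≤ #N := mul_card_le_card_of_disjoint
    (fun i hi k hk hik => by_contra fun h => hBind i hi k hk hik (hXX i k hik (hBℓ k hk) h))
    (fun i hi => (hX i (hBℓ i hi)).1) (fun i hi => (hX i (hBℓ i hi)).2)
  have hcover : ℓ ≤ 3 * #(A ∪ B) :=
    le_mul_card_of_forall_exists_near (exists_mem_union_near hω hAs hAdom hBdom)
  calc d * ℓ ≤ d * (3 * (#A + #B)) := by grw [hcover, card_union_le]
    _ ≤ 6 * #N := by linarith

section Walks

variable {V : Type} {G : SimpleGraph V} {w : Sym2 V → ℝ≥0∞}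

/-- For `m ≥ p.length` this is the junk value `w s(v, v)`. -/
noncomputable def stepWeight (w : Sym2 V → ℝ≥0∞) {u v : V} (p : G.Walk u v) (m : ℕ) : ℝ≥0∞ :=
  w s(p.getVert m, p.getVert (m + 1))

theorem walkWeight_append {u v x : V} (p : G.Walk u v) (q : G.Walk v x) :
    walkWeight G w (p.append q) = walkWeight G w p + walkWeight G w q := by
  simp [walkWeight, SimpleGraph.Walk.edges_append]

theorem walkWeight_eq_sum_stepWeight {u v : V} (p : G.Walk u v) :
    walkWeight G w p = ∑ m ∈ range p.length, stepWeight w p m := by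
  induction p with
  | nil => simp [walkWeight]
  | cons h q ih =>
    rw [SimpleGraph.Walk.length_cons, sum_range_succ']
    simp only [walkWeight, stepWeight, SimpleGraph.Walk.edges_cons, List.map_cons, List.sum_cons,
      SimpleGraph.Walk.getVert_cons_succ, SimpleGraph.Walk.getVert_zero, zero_add] at ih ⊢
    rw [ih, add_comm]

theorem walkWeight_take {u v : V} (p : G.Walk u v) {j : ℕ} (hj : j ≤ p.length) :
    walkWeight G w (p.take j) = ∑ m ∈ range j, stepWeight w p m := by
  rw [walkWeight_eq_sum_stepWeight, SimpleGraph.Walk.take_length, min_eq_left hj]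
  refine sum_congr rfl fun m hm => ?_
  have := mem_range.1 hm
  simp only [stepWeight, SimpleGraph.Walk.take_getVert]
  rw [min_eq_right (by omega), min_eq_right (by omega)]

theorem walkWeight_drop {u v : V} (p : G.Walk u v) (k : ℕ) :
    walkWeight G w (p.drop k) = ∑ m ∈ Ico k p.length, stepWeight w p m := by
  rw [walkWeight_eq_sum_stepWeight, sum_Ico_eq_sum_range]
  simp [stepWeight, add_assoc]

theorem stepWeight_le_maxEdge {u v : V} (p : G.Walk u v) {m : ℕ} (hm : m < p.length) :
    stepWeight w p m ≤ maxEdge G w p := by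
  have hmem : s(p.getVert m, p.getVert (m + 1)) ∈ p.edges :=
    p.mk_mem_edges_iff_exists.2 ⟨m, hm, rfl⟩
  exact List.le_max_of_le' 0 (List.mem_map_of_mem hmem) le_rfl

theorem PosWeights.stepWeight_pos_ne_top (hw : PosWeights G w) {u v : V} (p : G.Walk u v)
    {m : ℕ} (hm : m < p.length) : 0 < stepWeight w p m ∧ stepWeight w p m ≠ ⊤ :=
  hw _ (p.adj_getVert_succ hm)

theorem PosWeights.walkWeight_ne_top (hw : PosWeights G w) {u v : V} (p : G.Walk u v) :
    walkWeight G w p ≠ ⊤ := by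
  rw [walkWeight_eq_sum_stepWeight]
  exact ENNReal.sum_ne_top.2 fun m hm => (hw.stepWeight_pos_ne_top p (mem_range.1 hm)).2

theorem SimpleGraph.Walk.exists_orderEmbedding_not_adj {u v : V} (p : G.Walk u v)
    (H : SimpleGraph V) {ℓ : ℕ} (hℓ : ℓ ≤ (p.edges.filter fun e => e ∉ H.edgeSet).length) :
    ∃ pos : ℕ ↪o ℕ, ∀ i < ℓ,
      pos i < p.length ∧ ¬H.Adj (p.getVert (pos i)) (p.getVert (pos i + 1)) := by
  obtain ⟨pos, hpos⟩ := List.sublist_iff_exists_orderEmbedding_getElem?_eq.1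
    (List.filter_sublist (l := p.edges) (p := fun e => e ∉ H.edgeSet))
  refine ⟨pos, fun i hi => ?_⟩
  have hi' : i < (p.edges.filter fun e => e ∉ H.edgeSet).length := by omega
  obtain ⟨hlt, he⟩ := List.getElem?_eq_some_iff.1 ((List.getElem?_eq_getElem hi').symm.trans
    (hpos i)).symm
  have hmem := List.getElem_mem hi'
  rw [← he, p.getElem_edges] at hmem
  exact ⟨p.length_edges ▸ hlt, by simpa using (List.mem_filter.1 hmem).2⟩

section Shortest

variable {s t : V} {p : G.Walk s t}

theorem sum_stepWeight_Ico_le (hp : walkWeight G w p = gdist G w s t)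
    (hfin : walkWeight G w p ≠ ⊤) {j k : ℕ} (hjk : j ≤ k) (hk : k ≤ p.length)
    (q : G.Walk (p.getVert j) (p.getVert k)) :
    ∑ m ∈ Ico j k, stepWeight w p m ≤ walkWeight G w q := by
  have hsplit : walkWeight G w p = walkWeight G w (p.take j) +
      (∑ m ∈ Ico j k, stepWeight w p m + walkWeight G w (p.drop k)) := by
    rw [walkWeight_take p (hjk.trans hk), walkWeight_drop, walkWeight_eq_sum_stepWeight,
      sum_Ico_consecutive _ hjk hk, sum_range_add_sum_Ico _ (hjk.trans hk)]
  have hdetour : gdist G w s t ≤ walkWeight G w ((p.take j).append (q.append (p.drop k))) :=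
    iInf_le _ _
  rw [walkWeight_append, walkWeight_append, ← hp, hsplit] at hdetour
  rw [hsplit] at hfin
  have hdetour := ENNReal.le_of_add_le_add_left (ENNReal.add_ne_top.1 hfin).1 hdetour
  exact ENNReal.le_of_add_le_add_right
    (ENNReal.add_ne_top.1 (ENNReal.add_ne_top.1 hfin).2).2 hdetour

theorem sum_stepWeight_Ico_le_of_adj (hw : PosWeights G w)
    (hp : walkWeight G w p = gdist G w s t) {j k : ℕ} (hjk : j ≤ k) (hk : k ≤ p.length) {x : V}
    (hjx : G.Adj (p.getVert j) x) (hxk : G.Adj x (p.getVert k)) :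
    ∑ m ∈ Ico j k, stepWeight w p m ≤ w s(p.getVert j, x) + w s(x, p.getVert k) := by
  simpa [walkWeight] using sum_stepWeight_Ico_le hp (hw.walkWeight_ne_top p) hjk hk
    (.cons hjx (.cons hxk .nil))

end Shortest

end Walks

noncomputable def selectedAlong {V : Type} {G : SimpleGraph V} {u v : V} (S : V → Finset V)
    (p : G.Walk u v) (pos : ℕ → ℕ) (ℓ : ℕ) : Finset V :=
  (range ℓ).biUnion fun i => S (p.getVert (pos i)) ∪ S (p.getVert (pos i + 1))

namespace IsDLightInit

variable {V : Type} [Fintype V] {G : SimpleGraph V} {w : Sym2 V → ℝ≥0∞} {d : ℕ}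
  {H : SimpleGraph V} {S : V → Finset V}

theorem adj_of_mem (hinit : IsDLightInit G w d H S) {u x : V} (hx : x ∈ S u) : H.Adj u x :=
  (hinit.2.2.2 u x).2 ⟨hinit.1 u x hx, Or.inl hx⟩

theorem notMem_of_not_adj (hinit : IsDLightInit G w d H S) {u v : V} (hH : ¬H.Adj u v) :
    v ∉ S u :=
  fun hv => hH (hinit.adj_of_mem hv)

theorem card_eq_of_notMem (hinit : IsDLightInit G w d H S) {u v : V} (hG : G.Adj u v)
    (hv : v ∉ S u) : #(S u) = d := by
  by_contra hne
  have hcard := hinit.2.1 u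
  have hle : (G.neighborSet u).ncard ≤ (S u : Set V).ncard := by
    rw [Set.ncard_coe_finset, hcard]; omega
  have hall := Set.eq_of_subset_of_ncard_le (fun x hx => hinit.1 u x hx) hle (Set.toFinite _)
  exact hv (mem_coe.1 (hall ▸ hG))

variable {s t : V} {p : G.Walk s t}

theorem weight_le_stepWeight_left (hinit : IsDLightInit G w d H S) {m : ℕ} (hm : m < p.length)
    (hH : ¬H.Adj (p.getVert m) (p.getVert (m + 1))) {x : V} (hx : x ∈ S (p.getVert m)) :
    w s(p.getVert m, x) ≤ stepWeight w p m :=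
  hinit.2.2.1 _ _ (p.adj_getVert_succ hm) (hinit.notMem_of_not_adj hH) x hx

theorem weight_le_stepWeight_right (hinit : IsDLightInit G w d H S) {m : ℕ}
    (hm : m < p.length) (hH : ¬H.Adj (p.getVert m) (p.getVert (m + 1))) {x : V}
    (hx : x ∈ S (p.getVert (m + 1))) : w s(p.getVert (m + 1), x) ≤ stepWeight w p m := by
  rw [stepWeight, Sym2.eq_swap (a := p.getVert m)]
  exact hinit.2.2.1 _ _ (p.adj_getVert_succ hm).symm
    (hinit.notMem_of_not_adj fun h => hH h.symm) x hx

theorem sum_Ioo_stepWeight_le_of_not_disjoint_left (hinit : IsDLightInit G w d H S)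
    (hw : PosWeights G w) (hp : walkWeight G w p = gdist G w s t) {a b : ℕ} (hab : a < b)
    (hb : b < p.length) (hHa : ¬H.Adj (p.getVert a) (p.getVert (a + 1)))
    (hHb : ¬H.Adj (p.getVert b) (p.getVert (b + 1)))
    (hS : ¬Disjoint (S (p.getVert a)) (S (p.getVert b))) :
    ∑ m ∈ Ioo a b, stepWeight w p m ≤ stepWeight w p b := by
  obtain ⟨x, hxa, hxb⟩ := not_disjoint_iff.1 hS
  have hwb : w s(x, p.getVert b) ≤ stepWeight w p b := by
    rw [Sym2.eq_swap]
    exact hinit.weight_le_stepWeight_left hb hHb hxb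
  have hdetour := sum_stepWeight_Ico_le_of_adj hw hp hab.le hb.le (hinit.1 _ x hxa)
    (hinit.1 _ x hxb).symm
  rw [← Ioo_insert_left hab, sum_insert (by simp)] at hdetour
  exact ENNReal.le_of_add_le_add_left (hw.stepWeight_pos_ne_top p (hab.trans hb)).2
    (hdetour.trans (add_le_add (hinit.weight_le_stepWeight_left (hab.trans hb) hHa hxa) hwb))

theorem sum_Ioo_stepWeight_le_of_not_disjoint_right (hinit : IsDLightInit G w d H S)
    (hw : PosWeights G w) (hp : walkWeight G w p = gdist G w s t) {a b : ℕ} (hab : a < b)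
    (hb : b < p.length) (hHa : ¬H.Adj (p.getVert a) (p.getVert (a + 1)))
    (hHb : ¬H.Adj (p.getVert b) (p.getVert (b + 1)))
    (hS : ¬Disjoint (S (p.getVert (a + 1))) (S (p.getVert (b + 1)))) :
    ∑ m ∈ Ioo a b, stepWeight w p m ≤ stepWeight w p a := by
  obtain ⟨x, hxa, hxb⟩ := not_disjoint_iff.1 hS
  have hwb : w s(x, p.getVert (b + 1)) ≤ stepWeight w p b := by
    rw [Sym2.eq_swap]
    exact hinit.weight_le_stepWeight_right hb hHb hxb
  have hdetour := sum_stepWeight_Ico_le_of_adj hw hp (by omega : a + 1 ≤ b + 1) hb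
    (hinit.1 _ x hxa) (hinit.1 _ x hxb).symm
  rw [sum_Ico_succ_top (by omega), Ico_add_one_left_eq_Ioo] at hdetour
  exact ENNReal.le_of_add_le_add_right (hw.stepWeight_pos_ne_top p hb).2
    (hdetour.trans (add_le_add (hinit.weight_le_stepWeight_right (hab.trans hb) hHa hxa) hwb))

theorem mul_le_six_mul_card_selectedAlong (hinit : IsDLightInit G w d H S)
    (hw : PosWeights G w) (hp : walkWeight G w p = gdist G w s t) {ℓ : ℕ} (pos : ℕ ↪o ℕ)
    (hpos : ∀ i < ℓ, pos i < p.length ∧ ¬H.Adj (p.getVert (pos i)) (p.getVert (pos i + 1))) :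
    d * ℓ ≤ 6 * #(selectedAlong S p pos ℓ) := by
  have hsub : ∀ i < ℓ, S (p.getVert (pos i)) ∪ S (p.getVert (pos i + 1)) ⊆
      selectedAlong S p pos ℓ := fun i hi =>
    subset_biUnion_of_mem (fun i => S (p.getVert (pos i)) ∪ S (p.getVert (pos i + 1)))
      (mem_range.2 hi)
  refine mul_le_six_mul_card (ω := fun i => stepWeight w p (pos i))
    (fun i hi => hw.stepWeight_pos_ne_top p (hpos i hi).1)
    (fun i hi => ⟨?_, subset_union_left.trans (hsub i hi)⟩)
    (fun i hi => ⟨?_, subset_union_right.trans (hsub i hi)⟩)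
    (fun i k hik hk hS => (sum_Ioo_comp_le_sum_Ioo _ pos i k).trans ?_)
    (fun i k hik hk hS => (sum_Ioo_comp_le_sum_Ioo _ pos i k).trans ?_)
  · exact hinit.card_eq_of_notMem (p.adj_getVert_succ (hpos i hi).1)
      (hinit.notMem_of_not_adj (hpos i hi).2)
  · exact hinit.card_eq_of_notMem (p.adj_getVert_succ (hpos i hi).1).symm
      (hinit.notMem_of_not_adj fun h => (hpos i hi).2 h.symm)
  · exact hinit.sum_Ioo_stepWeight_le_of_not_disjoint_left hw hp (pos.lt_iff_lt.2 hik)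
      (hpos k hk).1 (hpos i (hik.trans hk)).2 (hpos k hk).2 hS
  · exact hinit.sum_Ioo_stepWeight_le_of_not_disjoint_right hw hp (pos.lt_iff_lt.2 hik)
      (hpos k hk).1 (hpos i (hik.trans hk)).2 (hpos k hk).2 hS

theorem exists_adj_support_of_mem_selectedAlong (hinit : IsDLightInit G w d H S) {ℓ : ℕ}
    {pos : ℕ → ℕ}
    (hpos : ∀ i < ℓ, pos i < p.length ∧ ¬H.Adj (p.getVert (pos i)) (p.getVert (pos i + 1)))
    {x : V} (hx : x ∈ selectedAlong S p pos ℓ) :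
    ∃ y ∈ p.support, H.Adj x y ∧ w s(x, y) ≤ maxEdge G w p := by
  obtain ⟨i, hi, hx⟩ := mem_biUnion.1 hx
  obtain ⟨hlt, hH⟩ := hpos i (mem_range.1 hi)
  rcases mem_union.1 hx with hx | hx
  · refine ⟨p.getVert (pos i), p.getVert_mem_support _, (hinit.adj_of_mem hx).symm, ?_⟩
    rw [Sym2.eq_swap]
    exact (hinit.weight_le_stepWeight_left hlt hH hx).trans (stepWeight_le_maxEdge p hlt)
  · refine ⟨p.getVert (pos i + 1), p.getVert_mem_support _, (hinit.adj_of_mem hx).symm, ?_⟩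
    rw [Sym2.eq_swap]
    exact (hinit.weight_le_stepWeight_right hlt hH hx).trans (stepWeight_le_maxEdge p hlt)

end IsDLightInit

theorem d_light_init_neighbors_general
    (V : Type) [Fintype V] (G : SimpleGraph V) (w : Sym2 V → ℝ≥0∞)
    (hw : PosWeights G w)
    (π : (s t : V) → G.Walk s t) (hπ : IsShortestPathScheme G w π)
    (d : ℕ) (H : SimpleGraph V) (S : V → Finset V)
    (hinit : IsDLightInit G w d H S)
    (s t : V) (ℓ : ℕ)
    (hℓ : ((π s t).edges.filter (fun e => e ∉ H.edgeSet)).length = ℓ) :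
    ∃ N : Finset V, ((d : ℝ) * ℓ) / 6 ≤ N.card ∧
      ∀ x ∈ N, ∃ y ∈ (π s t).support, H.Adj x y ∧ w s(x, y) ≤ maxEdge G w (π s t) := by
  obtain ⟨pos, hpos⟩ := (π s t).exists_orderEmbedding_not_adj H hℓ.ge
  refine ⟨selectedAlong S (π s t) pos ℓ, ?_,
    fun x hx => hinit.exists_adj_support_of_mem_selectedAlong hpos hx⟩
  have hcard : ((d * ℓ : ℕ) : ℝ) ≤ ((6 * #(selectedAlong S (π s t) pos ℓ) : ℕ) : ℝ) :=
    Nat.cast_le.2 (hinit.mul_le_six_mul_card_selectedAlong hw (hπ s t) pos hpos)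
  push_cast at hcard
  linarith

/-- Let `H` be a `d`-light initialization of a connected weighted graph `G`,
and let `π(s,t)` be a shortest `s`–`t` path in `G`. If exactly `ℓ` edges of `π(s,t)` are absent
from `H`, then there is a set `N` of at least `d·ℓ/6` vertices, each joined in `H` to some
vertex of `π(s,t)` by an edge of weight at most `W(s,t)`. -/
theorem d_light_init_neighbors
    (V : Type) [Fintype V] (G : SimpleGraph V) (w : Sym2 V → ℝ≥0∞)
    (hconn : G.Connected) (hw : PosWeights G w)
    (π : (s t : V) → G.Walk s t) (hπ : IsShortestPathScheme G w π)
    (d : ℕ) (H : SimpleGraph V) (S : V → Finset V)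
    (hinit : IsDLightInit G w d H S)
    (s t : V) (ℓ : ℕ)
    (hℓ : ((π s t).edges.filter (fun e => e ∉ H.edgeSet)).length = ℓ) :
    ∃ N : Finset V, ((d : ℝ) * ℓ) / 6 ≤ N.card ∧
      ∀ x ∈ N, ∃ y ∈ (π s t).support, H.Adj x y ∧ w s(x, y) ≤ maxEdge G w (π s t) :=
  d_light_init_neighbors_general V G w hw π hπ d H S hinit s t ℓ hℓ
end

section
/- Let G be a connected weighted graph, let s,t be vertices, and let x be a vertex joined in G to some vertex y lying on π(s,t) by an edge of weight at most W(s,t). Then d_G(s,x) + d_G(x,t) ≤ d_G(s,t) + 2·W(s,t); consequently the s–t path through a shortest path tree of G rooted at x has length at most d_G(s,t) + 2·W(s,t). -/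
open scoped ENNReal Classical

/-- If `x` is joined in `G` to a vertex `y` lying on `π(s,t)` by an edge of
weight at most `W(s,t)`, then `d_G(s,x) + d_G(x,t) ≤ d_G(s,t) + 2·W(s,t)`; consequently the
`s`–`t` path through a shortest path tree of `G` rooted at `x` (whose length is exactly
`d_G(s,x) + d_G(x,t)`) has length at most `d_G(s,t) + 2·W(s,t)`. -/
theorem through_neighbor_two_W
    (V : Type) [Fintype V] (G : SimpleGraph V) (w : Sym2 V → ℝ≥0∞)
    (hconn : G.Connected) (hw : PosWeights G w)
    (π : (s t : V) → G.Walk s t) (hπ : IsShortestPathScheme G w π)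
    (s t x y : V)
    (hy : y ∈ (π s t).support)
    (hxy : G.Adj x y) (hwxy : w s(x, y) ≤ maxEdge G w (π s t)) :
    gdist G w s x + gdist G w x t ≤ gdist G w s t + 2 * maxEdge G w (π s t) := by
  set p := π s t
  set W := maxEdge G w p with hW
  set p1 := p.takeUntil y hy with hp1
  set p2 := p.dropUntil y hy with hp2
  have hedges : p.edges = p1.edges ++ p2.edges := by
    conv_lhs => rw [← p.take_spec hy]
    exact SimpleGraph.Walk.edges_append _ _
  have hsum : walkWeight G w p = walkWeight G w p1 + walkWeight G w p2 := by
    simp [walkWeight, hedges]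
  -- walk from s to x: p1 followed by edge y-x
  have h1 : gdist G w s x ≤ walkWeight G w p1 + w s(x, y) := by
    have := iInf_le (fun q : G.Walk s x => walkWeight G w q)
      (p1.append (SimpleGraph.Walk.cons hxy.symm SimpleGraph.Walk.nil))
    refine le_trans this ?_
    simp [walkWeight, SimpleGraph.Walk.edges_append, Sym2.eq_swap (a := y) (b := x)]
  have h2 : gdist G w x t ≤ w s(x, y) + walkWeight G w p2 := by
    have := iInf_le (fun q : G.Walk x t => walkWeight G w q)
      (SimpleGraph.Walk.cons hxy p2)
    refine le_trans this ?_
    simp [walkWeight]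
  have hdist : walkWeight G w p = gdist G w s t := hπ s t
  calc gdist G w s x + gdist G w x t
      ≤ (walkWeight G w p1 + w s(x, y)) + (w s(x, y) + walkWeight G w p2) :=
        add_le_add h1 h2
    _ = (walkWeight G w p1 + walkWeight G w p2) + 2 * w s(x, y) := by ring
    _ = gdist G w s t + 2 * w s(x, y) := by rw [← hsum, hdist]
    _ ≤ gdist G w s t + 2 * W := by
        gcongr
end

section
/- Let a, b, c, k, α > 0 be constants with α ≤ 1, let G be an n-vertex connected weighted graph, and let p* be a parameter. Fix an error function β(·,·) on vertex pairs. Suppose that: (i) for every set 𝒫 of vertex pairs with |𝒫| ≤ p*, there exists a subgraph on at most K·n^a edges (K a constant) with d_H(s,t) ≤ d_G(s,t) + β(s,t) for all (s,t) ∈ 𝒫; and (ii) for every set 𝒫 with |𝒫| ≥ p*, there exists a subgraph on at most k·n^b·|𝒫|^c edges in which at least α·|𝒫| of the pairs (s,t) ∈ 𝒫 satisfy d_H(s,t) ≤ d_G(s,t) + β(s,t). Then for every set 𝒫 of vertex pairs there exists a subgraph H of G on at most C·(n^a + n^b·|𝒫|^c) edges (C a constant depending only on a,b,c,k,α,K)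 with d_H(s,t) ≤ d_G(s,t) + β(s,t) for all (s,t) ∈ 𝒫. -/
open scoped ENNReal Classical

/-
The pairs left unsatisfied by the subgraph of (ii) form a set of size at most `(1 - α)|𝒫|`, so one
recurses on them and takes the union of the two subgraphs. Since `x ↦ x ^ c` scales the cost of the
remaining instance by `ρ = (1 - α) ^ c < 1`, the edge counts of the successive rounds form a geometric
series, and the total is at most `K·n^a + k·n^b·|𝒫|^c / (1 - ρ)`.
-/

open Set

lemma gdist_le_of_le {V : Type} {H H' : SimpleGraph V} (w : Sym2 V → ℝ≥0∞) (h : H ≤ H')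
    (s t : V) : gdist H' w s t ≤ gdist H w s t := by
  refine le_iInf fun p => (iInf_le _ (p.mapLe h)).trans_eq ?_
  have hw : w ∘ Sym2.map (SimpleGraph.Hom.ofLE h) = w := by
    funext e
    exact Sym2.ind (fun _ _ => rfl) e
  simp only [walkWeight, SimpleGraph.Walk.mapLe, SimpleGraph.Walk.edges_map, List.map_map, hw]

lemma SimpleGraph.ncard_edgeSet_sup_le {V : Type} (H H' : SimpleGraph V) :
    ((H ⊔ H').edgeSet.ncard : ℝ) ≤ H.edgeSet.ncard + H'.edgeSet.ncard := by
  rw [SimpleGraph.edgeSet_sup]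
  exact_mod_cast ncard_union_le _ _

lemma Set.ncard_sdiff_le_of_le_ncard {ι : Type*} {P S : Set ι} {α : ℝ} (hSP : S ⊆ P)
    (hP : P.Finite) (h : α * P.ncard ≤ S.ncard) : ((P \ S).ncard : ℝ) ≤ (1 - α) * P.ncard := by
  have hcard : ((P \ S).ncard : ℝ) + S.ncard = P.ncard := by
    exact_mod_cast ncard_sdiff_add_ncard_of_subset hSP hP
  linarith

/-- `1 - ρ` for the ratio `ρ = (1 - α) ^ c` of the geometric series of edge counts. -/
noncomputable def slackFactor (α c : ℝ) : ℝ := 1 - (1 - α) ^ c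

lemma slackFactor_pos {α c : ℝ} (hα : 0 < α) (hα1 : α ≤ 1) (hc : 0 < c) :
    0 < slackFactor α c := by
  rw [slackFactor, sub_pos]
  rcases hα1.lt_or_eq with hlt | rfl
  · exact Real.rpow_lt_one (by linarith) (by linarith) hc
  · simp [Real.zero_rpow hc.ne']

lemma add_div_slackFactor_mul_rpow_le {α c B x y : ℝ} (hα : 0 < α) (hα1 : α ≤ 1) (hc : 0 < c)
    (hB : 0 ≤ B) (hx : 0 ≤ x) (hy : 0 ≤ y) (hxy : x ≤ (1 - α) * y) :
    B * y ^ c + B / slackFactor α c * x ^ c ≤ B / slackFactor α c * y ^ c := by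
  have hδ := slackFactor_pos hα hα1 hc
  have hxc : x ^ c ≤ (1 - α) ^ c * y ^ c := by
    rw [← Real.mul_rpow (by linarith) hy]
    exact Real.rpow_le_rpow hx hxy hc.le
  calc B * y ^ c + B / slackFactor α c * x ^ c
      ≤ B * y ^ c + B / slackFactor α c * ((1 - α) ^ c * y ^ c) := by gcongr
    _ = B / slackFactor α c * y ^ c := by
        field_simp
        rw [slackFactor]
        ring

theorem exists_le_forall_sat_of_fraction {L ι : Type*} [SemilatticeSup L]
    (size : L → ℝ) (size_sup_le : ∀ x y, size (x ⊔ y) ≤ size x + size y)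
    (sat : L → ι → Prop) (sat_mono : Monotone sat)
    {G : L} {α c A B : ℝ} {pstar : ℕ} (hα : 0 < α) (hα1 : α ≤ 1) (hc : 0 < c) (hB : 0 ≤ B)
    (small : ∀ P : Set ι, P.ncard ≤ pstar → ∃ H ≤ G, size H ≤ A ∧ ∀ i ∈ P, sat H i)
    (large : ∀ P : Set ι, pstar ≤ P.ncard →
      ∃ H ≤ G, size H ≤ B * (P.ncard : ℝ) ^ c ∧ α * P.ncard ≤ ({i ∈ P | sat H i}.ncard : ℝ))
    (P : Set ι) :
    ∃ H ≤ G, size H ≤ A + B / slackFactor α c * (P.ncard : ℝ) ^ c ∧ ∀ i ∈ P, sat H i := by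
  have hδ := slackFactor_pos hα hα1 hc
  induction hn : P.ncard using Nat.strong_induction_on generalizing P with
  | _ n ih =>
    subst hn
    by_cases hsmall : P.ncard ≤ pstar
    · obtain ⟨H, hHG, hsize, hsat⟩ := small P hsmall
      exact ⟨H, hHG, hsize.trans (le_add_of_nonneg_right (by positivity)), hsat⟩
    obtain ⟨H₁, hH₁G, hsize₁, hfrac⟩ := large P (not_le.mp hsmall).le
    set S := {i ∈ P | sat H₁ i}
    have hPpos : 0 < P.ncard := by omega
    have hU : ((P \ S).ncard : ℝ) ≤ (1 - α) * P.ncard :=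
      ncard_sdiff_le_of_le_ncard (sep_subset _ _) (finite_of_ncard_pos hPpos) hfrac
    have hUlt : (P \ S).ncard < P.ncard := by
      have : (0 : ℝ) < α * P.ncard := by positivity
      exact_mod_cast (by linarith : ((P \ S).ncard : ℝ) < P.ncard)
    obtain ⟨H₂, hH₂G, hsize₂, hsat₂⟩ := ih _ hUlt (P \ S) rfl
    refine ⟨H₁ ⊔ H₂, sup_le hH₁G hH₂G, ?_, fun i hi => ?_⟩
    · calc size (H₁ ⊔ H₂) ≤ size H₁ + size H₂ := size_sup_le _ _
        _ ≤ B * (P.ncard : ℝ) ^ c + (A + B / slackFactor α c * ((P \ S).ncard : ℝ) ^ c) :=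
            add_le_add hsize₁ hsize₂
        _ ≤ A + B / slackFactor α c * (P.ncard : ℝ) ^ c := by
            linarith [add_div_slackFactor_mul_rpow_le hα hα1 hc hB (Nat.cast_nonneg _)
              (Nat.cast_nonneg _) hU]
    · by_cases hiS : i ∈ S
      · exact sat_mono le_sup_left i hiS.2
      · exact sat_mono le_sup_right i (hsat₂ i ⟨hi, hiS⟩)

theorem slack_to_pairwise_spanner_general
    (a b c k α K : ℝ) (hc : 0 < c) (hk : 0 < k)
    (hα : 0 < α) (hα1 : α ≤ 1) :
    ∃ C : ℝ, 0 < C ∧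
      ∀ (V : Type) [Fintype V] (G : SimpleGraph V) (w : Sym2 V → ℝ≥0∞),
        G.Connected → PosWeights G w →
        ∀ (β : V → V → ℝ≥0∞) (pstar : ℕ),
          (∀ P : Set (V × V), P.ncard ≤ pstar →
            ∃ H : SimpleGraph V, H ≤ G ∧
              (H.edgeSet.ncard : ℝ) ≤ K * (Fintype.card V : ℝ) ^ a ∧
              ∀ s t : V, (s, t) ∈ P → gdist H w s t ≤ gdist G w s t + β s t) →
          (∀ P : Set (V × V), pstar ≤ P.ncard →
            ∃ H : SimpleGraph V, H ≤ G ∧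
              (H.edgeSet.ncard : ℝ) ≤
                k * (Fintype.card V : ℝ) ^ b * (P.ncard : ℝ) ^ c ∧
              α * (P.ncard : ℝ) ≤
                (({p ∈ P | gdist H w p.1 p.2 ≤ gdist G w p.1 p.2 + β p.1 p.2}).ncard : ℝ)) →
          ∀ P : Set (V × V),
            ∃ H : SimpleGraph V, H ≤ G ∧
              (H.edgeSet.ncard : ℝ) ≤
                C * ((Fintype.card V : ℝ) ^ a +
                  (Fintype.card V : ℝ) ^ b * (P.ncard : ℝ) ^ c) ∧
              ∀ s t : V, (s, t) ∈ P → gdist H w s t ≤ gdist G w s t + β s t := by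
  set C := max K (k / slackFactor α c)
  refine ⟨C, lt_max_of_lt_right (div_pos hk (slackFactor_pos hα hα1 hc)), ?_⟩
  intro V _ G w _ _ β pstar hsmall hlarge P
  set n : ℝ := (Fintype.card V : ℝ)
  obtain ⟨H, hHG, hsize, hsat⟩ := exists_le_forall_sat_of_fraction
    (fun H : SimpleGraph V => (H.edgeSet.ncard : ℝ)) SimpleGraph.ncard_edgeSet_sup_le
    (fun (H : SimpleGraph V) (p : V × V) => gdist H w p.1 p.2 ≤ gdist G w p.1 p.2 + β p.1 p.2)
    (fun _ _ h p hp => (gdist_le_of_le w h p.1 p.2).trans hp) hα hα1 hc (by positivity)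
    (fun P hP => (hsmall P hP).imp fun H ⟨hHG, hsize, hsat⟩ => ⟨hHG, hsize, fun p => hsat p.1 p.2⟩)
    hlarge P
  refine ⟨H, hHG, hsize.trans ?_, fun s t => hsat (s, t)⟩
  calc K * n ^ a + k * n ^ b / slackFactor α c * (P.ncard : ℝ) ^ c
      = K * n ^ a + k / slackFactor α c * (n ^ b * (P.ncard : ℝ) ^ c) := by ring
    _ ≤ C * n ^ a + C * (n ^ b * (P.ncard : ℝ) ^ c) := by
        gcongr
        exacts [le_max_left _ _, le_max_right _ _]
    _ = C * (n ^ a + n ^ b * (P.ncard : ℝ) ^ c) := by ring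

/-- The slack lemma: if (i) every set of at most `p*` vertex pairs admits a
pairwise `+β(·,·)` spanner on at most `K·n^a` edges, and (ii) every set `𝒫` of at least `p*`
vertex pairs admits a subgraph on at most `k·n^b·|𝒫|^c` edges satisfying at least `α·|𝒫|` of
the pairs, then every set `𝒫` of vertex pairs admits a pairwise `+β(·,·)` spanner on at most
`C·(n^a + n^b·|𝒫|^c)` edges, where `C` depends only on `a, b, c, k, α, K`. -/
theorem slack_to_pairwise_spanner
    (a b c k α K : ℝ) (ha : 0 < a) (hb : 0 < b) (hc : 0 < c) (hk : 0 < k)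
    (hα : 0 < α) (hα1 : α ≤ 1) (hK : 0 < K) :
    ∃ C : ℝ, 0 < C ∧
      ∀ (V : Type) [Fintype V] (G : SimpleGraph V) (w : Sym2 V → ℝ≥0∞),
        G.Connected → PosWeights G w →
        ∀ (β : V → V → ℝ≥0∞) (pstar : ℕ),
          (∀ P : Set (V × V), P.ncard ≤ pstar →
            ∃ H : SimpleGraph V, H ≤ G ∧
              (H.edgeSet.ncard : ℝ) ≤ K * (Fintype.card V : ℝ) ^ a ∧
              ∀ s t : V, (s, t) ∈ P → gdist H w s t ≤ gdist G w s t + β s t) →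
          (∀ P : Set (V × V), pstar ≤ P.ncard →
            ∃ H : SimpleGraph V, H ≤ G ∧
              (H.edgeSet.ncard : ℝ) ≤
                k * (Fintype.card V : ℝ) ^ b * (P.ncard : ℝ) ^ c ∧
              α * (P.ncard : ℝ) ≤
                (({p ∈ P | gdist H w p.1 p.2 ≤ gdist G w p.1 p.2 + β p.1 p.2}).ncard : ℝ)) →
          ∀ P : Set (V × V),
            ∃ H : SimpleGraph V, H ≤ G ∧
              (H.edgeSet.ncard : ℝ) ≤
                C * ((Fintype.card V : ℝ) ^ a +
                  (Fintype.card V : ℝ) ^ b * (P.ncard : ℝ) ^ c) ∧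
              ∀ s t : V, (s, t) ∈ P → gdist H w s t ≤ gdist G w s t + β s t :=
  slack_to_pairwise_spanner_general a b c k α K hc hk hα hα1
end
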